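/- The polar representation q = A·exp(B·j) with A, B complex is not unique when the first two components of q vanish: the quaternion k admits the two distinct factorizations k = i·exp((π/2)·j) (i.e., A = i, B = π/2) and k = exp((π/2)·i·j) (i.e., A = 1, B = (π/2)·i), where i·j = k. -/

import Mathlib

open scoped Quaternion

/-- The quaternion `w + x·i + y·j + z·k`. -/
def Qmk (w x y z : ℝ) : ℍ[ℝ] := ⟨w, x, y, z⟩

/-!
For a unit imaginary quaternion `u` one has `u² = -1`, so `exp (θ u) = cos θ + sin θ · u`
exactly as for `exp (iθ)` in `ℂ`; at `θ = π/2` this gives `exp ((π/2) u) = u`.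
With `u = j` the first factorization becomes `i · j = k`, and with `u = k` the second one is
immediate. The two pairs `(A, B)` already differ in their first entries.
-/

namespace Quaternion

open NormedSpace

lemma exp_real_smul_of_re_eq_zero_of_norm_eq_one {u : ℍ[ℝ]} (hre : u.re = 0) (hu : ‖u‖ = 1)
    (θ : ℝ) : exp (θ • u) = ↑(Real.cos θ) + Real.sin θ • u := by
  rw [exp_of_re_eq_zero _ (by simp [hre]), norm_smul, hu, mul_one, Real.norm_eq_abs,
    Real.cos_abs, smul_smul]
  rcases abs_cases θ with ⟨hθ, -⟩ | hθ
  · rcases eq_or_ne θ 0 with rfl | h0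
    · simp
    · rw [hθ, div_mul_cancel₀ _ h0]
  · rw [hθ.1, Real.sin_neg, neg_div_neg_eq, div_mul_cancel₀ _ hθ.2.ne]

lemma exp_pi_div_two_smul_of_re_eq_zero_of_norm_eq_one {u : ℍ[ℝ]} (hre : u.re = 0)
    (hu : ‖u‖ = 1) : exp ((Real.pi / 2) • u) = u := by
  simp [exp_real_smul_of_re_eq_zero_of_norm_eq_one hre hu]

end Quaternion

lemma norm_Qmk (w x y z : ℝ) : ‖Qmk w x y z‖ = √(w ^ 2 + x ^ 2 + y ^ 2 + z ^ 2) := by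
  rw [← Real.sqrt_sq (norm_nonneg _), sq, ← Quaternion.normSq_eq_norm_mul_self,
    Quaternion.normSq_def']
  simp [Qmk]

lemma smul_Qmk (r w x y z : ℝ) : r • Qmk w x y z = Qmk (r * w) (r * x) (r * y) (r * z) := rfl

lemma Qmk_i_mul_Qmk_j : Qmk 0 1 0 0 * Qmk 0 0 1 0 = Qmk 0 0 0 1 := by
  ext <;> simp only [Quaternion.re_mul, Quaternion.imI_mul, Quaternion.imJ_mul,
    Quaternion.imK_mul] <;> simp [Qmk]

/-- The quaternion `k` admits two distinct polar factorizations: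
`k = i·exp((π/2)·j)` (i.e. `A = i`, `B = π/2`) and `k = exp((π/2)·i·j) = exp((π/2)·k)`
(i.e. `A = 1`, `B = (π/2)·i`), so the polar representation is not unique. -/
theorem k_two_polar_factorizations :
    Qmk 0 0 0 1 = Qmk 0 1 0 0 * NormedSpace.exp (Qmk 0 0 (Real.pi / 2) 0) ∧
    Qmk 0 0 0 1 = (1 : ℍ[ℝ]) * NormedSpace.exp (Qmk 0 0 0 (Real.pi / 2)) ∧
    (Qmk 0 1 0 0, Qmk (Real.pi / 2) 0 0 0) ≠ ((1 : ℍ[ℝ]), Qmk 0 (Real.pi / 2) 0 0) := by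
  have exp_j : NormedSpace.exp (Qmk 0 0 (Real.pi / 2) 0) = Qmk 0 0 1 0 := by
    simpa [smul_Qmk] using Quaternion.exp_pi_div_two_smul_of_re_eq_zero_of_norm_eq_one
      (u := Qmk 0 0 1 0) rfl (by simp [norm_Qmk])
  have exp_k : NormedSpace.exp (Qmk 0 0 0 (Real.pi / 2)) = Qmk 0 0 0 1 := by
    simpa [smul_Qmk] using Quaternion.exp_pi_div_two_smul_of_re_eq_zero_of_norm_eq_one
      (u := Qmk 0 0 0 1) rfl (by simp [norm_Qmk])
  refine ⟨?_, ?_, ?_⟩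
  · rw [exp_j, Qmk_i_mul_Qmk_j]
  · rw [exp_k, one_mul]
  · intro h
    simpa [Qmk] using congrArg (fun p => p.1.imI) h
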